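/- Let G be a strongly connected digraph containing a directed closed walk of every length greater than one, and let A be a finite set of vertices of G. Then there exists a finite subdigraph G′ of G that is strongly connected, contains closed walks of every length greater than 1, and contains all elements of A. -/
import Mathlib


/-- There is a directed walk of length `k` from `u` to `v` in the digraph with edge relation `E`. -/
def HasWalk {A : Type*} (E : A → A → Prop) (u v : A) (k : ℕ) : Prop :=
  ∃ w : ℕ → A, w 0 = u ∧ w k = v ∧ ∀ i < k, E (w i) (w (i + 1))

theorem hasWalk_refl {A : Type*} (E : A → A → Prop) (u : A) : HasWalk E u u 0 :=
  ⟨fun _ => u, rfl, rfl, fun i hi => absurd hi (by omega)⟩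

theorem hasWalk_concat {A : Type*} {E : A → A → Prop} {u v x : A} {k l : ℕ}
    (h1 : HasWalk E u v k) (h2 : HasWalk E v x l) : HasWalk E u x (k + l) := by
  obtain ⟨w1, h10, h1k, h1e⟩ := h1
  obtain ⟨w2, h20, h2k, h2e⟩ := h2
  refine ⟨fun i => if i < k then w1 i else w2 (i - k), ?_, ?_, ?_⟩
  · rcases Nat.eq_zero_or_pos k with hk | hk
    · subst hk
      simpa using h20.trans (h1k.symm.trans h10)
    · simp [hk, h10]
  · have h : ¬ (k + l < k) := by omega
    simp only [h, if_false]
    have : k + l - k = l := by omega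
    rw [this, h2k]
  · intro i hi
    rcases lt_trichotomy (i + 1) k with h | h | h
    · have hik : i < k := by omega
      simp only [hik, h, if_true]
      exact h1e i hik
    · have hik : i < k := by omega
      have h' : ¬ (i + 1 < k) := by omega
      simp only [hik, h', if_true, if_false]
      have : i + 1 - k = 0 := by omega
      rw [this, h20]
      have : v = w1 k := h1k.symm
      rw [this, ← h]
      exact h1e i hik
    · have hik : ¬ (i < k) := by omega
      have h' : ¬ (i + 1 < k) := by omega
      simp only [hik, h', if_false]
      have : i + 1 - k = (i - k) + 1 := by omega
      rw [this]
      exact h2e (i - k) (by omega)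

theorem hasWalk_mul {A : Type*} {E : A → A → Prop} {u : A} {k : ℕ}
    (h : HasWalk E u u k) : ∀ n : ℕ, HasWalk E u u (n * k)
  | 0 => by simpa using hasWalk_refl E u
  | n + 1 => by
      have := hasWalk_concat (hasWalk_mul h n) h
      rwa [show n * k + k = (n + 1) * k by ring] at this

theorem hasWalk_segment {A : Type*} {E : A → A → Prop} {w : ℕ → A} {k : ℕ}
    (he : ∀ i < k, E (w i) (w (i + 1))) {a b : ℕ} (hab : a ≤ b) (hbk : b ≤ k) :
    HasWalk E (w a) (w b) (b - a) := by
  refine ⟨fun i => w (a + i), by simp, ?_, ?_⟩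
  · show w (a + (b - a)) = w b
    have h1 : a + (b - a) = b := by omega
    rw [h1]
  · intro i hi
    show E (w (a + i)) (w (a + (i + 1)))
    have h1 : a + (i + 1) = (a + i) + 1 := by omega
    rw [h1]
    exact he (a + i) (by omega)

theorem hasWalk_cast {A : Type*} {E : A → A → Prop} {u v : A} {k l : ℕ}
    (h : HasWalk E u v k) (hkl : k = l) : HasWalk E u v l := hkl ▸ h

/-- If a digraph `G = (V, E)` is strongly connected and contains closed walks of every length
greater than one, then for any finite set `S` of vertices there is a finite subdigraph
`G' = (V', E')` of `G` which is strongly connected, contains closed walks of every length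
greater than one, and contains all elements of `S`. -/
theorem finite_subdigraph {V : Type*} (E : V → V → Prop)
    (hsc : ∀ u v : V, ∃ k, HasWalk E u v k)
    (hcyc : ∀ k : ℕ, 2 ≤ k → ∃ u : V, HasWalk E u u k)
    (S : Set V) (hS : S.Finite) :
    ∃ (V' : Set V) (E' : V → V → Prop),
      V'.Finite ∧
      (∀ u v : V, E' u v → E u v ∧ u ∈ V' ∧ v ∈ V') ∧
      S ⊆ V' ∧
      (∀ u ∈ V', ∀ v ∈ V', ∃ k, HasWalk E' u v k) ∧
      (∀ k : ℕ, 2 ≤ k → ∃ u : V, HasWalk E' u u k) := by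
  classical
  have hcyc' : ∀ j : ℕ, ∃ (u : V) (w : ℕ → V),
      w 0 = u ∧ w (j + 2) = u ∧ ∀ i < j + 2, E (w i) (w (i + 1)) := by
    intro j
    obtain ⟨u, w, h0, hk, he⟩ := hcyc (j + 2) (by omega)
    exact ⟨u, w, h0, hk, he⟩
  choose c W hW0 hWk hWe using hcyc'
  set u2 : V := c 0 with hu2
  choose f F hF0 hFk hFe using fun v => hsc u2 v
  choose g G hG0 hGk hGe using fun v => hsc v u2
  set p := f (c 1) with hp
  set q := g (c 1) with hq
  set J := p + q + 1 with hJ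
  set T : Set V := S ∪ c '' Set.Iic J with hT
  have hTfin : T.Finite := hS.union ((Set.finite_Iic J).image c)
  set V' : Set V := S ∪ (⋃ v ∈ T, F v '' Set.Iic (f v) ∪ G v '' Set.Iic (g v)) ∪
      (⋃ j ∈ Set.Iic J, W j '' Set.Iic (j + 2)) with hV'
  have hV'fin : V'.Finite := by
    refine ((hS.union (hTfin.biUnion fun v _ => ?_)).union
      ((Set.finite_Iic J).biUnion fun j _ => (Set.finite_Iic _).image _))
    exact ((Set.finite_Iic _).image _).union ((Set.finite_Iic _).image _)
  set E' : V → V → Prop := fun a b => E a b ∧ a ∈ V' ∧ b ∈ V' with hE'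
  have hmemF : ∀ x ∈ T, ∀ i ≤ f x, F x i ∈ V' := by
    intro x hx i hi
    exact Set.mem_union_left _ (Set.mem_union_right _
      (Set.mem_biUnion hx (Or.inl ⟨i, hi, rfl⟩)))
  have hmemG : ∀ x ∈ T, ∀ i ≤ g x, G x i ∈ V' := by
    intro x hx i hi
    exact Set.mem_union_left _ (Set.mem_union_right _
      (Set.mem_biUnion hx (Or.inr ⟨i, hi, rfl⟩)))
  have hmemW : ∀ j ≤ J, ∀ i ≤ j + 2, W j i ∈ V' := by
    intro j hj i hi
    exact Set.mem_union_right _ (Set.mem_biUnion hj ⟨i, hi, rfl⟩)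
  have hmemS : S ⊆ V' := fun s hs => Set.mem_union_left _ (Set.mem_union_left _ hs)
  have hFe' : ∀ x ∈ T, ∀ i < f x, E' (F x i) (F x (i + 1)) := fun x hx i hi =>
    ⟨hFe x i hi, hmemF x hx i hi.le, hmemF x hx (i + 1) hi⟩
  have hGe' : ∀ x ∈ T, ∀ i < g x, E' (G x i) (G x (i + 1)) := fun x hx i hi =>
    ⟨hGe x i hi, hmemG x hx i hi.le, hmemG x hx (i + 1) hi⟩
  have hWe' : ∀ j ≤ J, ∀ i < j + 2, E' (W j i) (W j (i + 1)) := fun j hj i hi =>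
    ⟨hWe j i hi, hmemW j hj i hi.le, hmemW j hj (i + 1) hi⟩
  have hcT : ∀ j ≤ J, c j ∈ T := fun j hj => Set.mem_union_right _ ⟨j, hj, rfl⟩
  have hFwalk : ∀ x ∈ T, HasWalk E' u2 x (f x) := fun x hx =>
    ⟨F x, hF0 x, hFk x, fun i hi => hFe' x hx i hi⟩
  have hGwalk : ∀ x ∈ T, HasWalk E' x u2 (g x) := fun x hx =>
    ⟨G x, hG0 x, hGk x, fun i hi => hGe' x hx i hi⟩
  have hWwalk : ∀ j ≤ J, HasWalk E' (c j) (c j) (j + 2) := fun j hj =>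
    ⟨W j, hW0 j, hWk j, fun i hi => hWe' j hj i hi⟩
  -- reaching u2 from any vertex of V'
  have reach_to : ∀ u ∈ V', ∃ k, HasWalk E' u u2 k := by
    intro u hu
    simp only [hV', Set.mem_union, Set.mem_iUnion, Set.mem_image, Set.mem_Iic] at hu
    rcases hu with (hu | ⟨x, hx, hux⟩) | ⟨j, hj, i, hi, hui⟩
    · exact ⟨g u, hGwalk u (Set.mem_union_left _ hu)⟩
    · rcases hux with ⟨i, hi, hui⟩ | ⟨i, hi, hui⟩
      · have s1 := hasWalk_segment (hFe' x hx) hi le_rfl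
        rw [hui, hFk x] at s1
        exact ⟨_, hasWalk_concat s1 (hGwalk x hx)⟩
      · have s1 := hasWalk_segment (hGe' x hx) hi le_rfl
        rw [hui, hGk x] at s1
        exact ⟨_, s1⟩
    · have s1 := hasWalk_segment (hWe' j hj) hi le_rfl
      rw [hui, hWk j] at s1
      exact ⟨_, hasWalk_concat s1 (hGwalk (c j) (hcT j hj))⟩
  have reach_from : ∀ v ∈ V', ∃ k, HasWalk E' u2 v k := by
    intro v hv
    simp only [hV', Set.mem_union, Set.mem_iUnion, Set.mem_image, Set.mem_Iic] at hv
    rcases hv with (hv | ⟨x, hx, hvx⟩) | ⟨j, hj, i, hi, hvi⟩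
    · exact ⟨f v, hFwalk v (Set.mem_union_left _ hv)⟩
    · rcases hvx with ⟨i, hi, hvi⟩ | ⟨i, hi, hvi⟩
      · have s1 := hasWalk_segment (hFe' x hx) (Nat.zero_le i) hi
        rw [hvi, hF0 x] at s1
        exact ⟨_, s1⟩
      · have s1 := hasWalk_segment (hGe' x hx) (Nat.zero_le i) hi
        rw [hvi, hG0 x] at s1
        exact ⟨_, hasWalk_concat (hFwalk x hx) s1⟩
    · have s1 := hasWalk_segment (hWe' j hj) (Nat.zero_le i) hi
      rw [hvi, hW0 j] at s1
      exact ⟨_, hasWalk_concat (hFwalk (c j) (hcT j hj)) s1⟩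
  refine ⟨V', E', hV'fin, fun u v h => h, hmemS, ?_, ?_⟩
  · intro u hu v hv
    obtain ⟨k1, h1⟩ := reach_to u hu
    obtain ⟨k2, h2⟩ := reach_from v hv
    exact ⟨k1 + k2, hasWalk_concat h1 h2⟩
  · intro k hk
    by_cases hkJ : k ≤ J + 2
    · refine ⟨c (k - 2), hasWalk_cast (hWwalk (k - 2) (by omega)) (by omega)⟩
    · -- k > J + 2 = p + q + 3
      have h1J : (1 : ℕ) ≤ J := by omega
      have h0J : (0 : ℕ) ≤ J := by omega
      have hc1 : c 1 ∈ T := hcT 1 h1J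
      have A : HasWalk E' u2 (c 1) p := hFwalk (c 1) hc1
      have B : HasWalk E' (c 1) u2 q := hGwalk (c 1) hc1
      have C3 : HasWalk E' (c 1) (c 1) 3 := hWwalk 1 h1J
      have C2 : HasWalk E' u2 u2 2 := hWwalk 0 h0J
      set r := k - p - q with hr
      rcases Nat.even_or_odd r with ⟨m, hm⟩ | ⟨m, hm⟩
      · refine ⟨u2, hasWalk_cast
          (hasWalk_concat (hasWalk_concat A B) (hasWalk_mul C2 m)) (by omega)⟩
      · refine ⟨u2, hasWalk_cast
          (hasWalk_concat (hasWalk_concat (hasWalk_concat A C3) B)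
            (hasWalk_mul C2 (m - 1))) (by omega)⟩
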